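/- arXiv:2508.13346 — 7 statements merged into one kernel-verified Lean document; each statement's English description precedes it below -/
import Mathlib

section
/- Let H be a real Hilbert space, let φ₁, …, φ_N be elements of H with ‖φ_i‖² = 1 for all i = 1, …, N, and let W be a finite-dimensional subspace of H with r := dim(W). Define ε := (1/N) · Σ_{i=1}^N inf_{g ∈ W} ‖g − φ_i‖². Then r ≥ N · (1 − ε) / (1 + √(Σ_{i ≠ j} ⟨φ_i, φ_j⟩²)). -/
/-!
Let `S = ∑_{i ≠ j} ⟪φ i, φ j⟫²`. Splitting the Gram matrix of the `φ i` into its diagonal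
(entries at most `1`) and its off-diagonal part (operator norm at most its Frobenius norm `√S`)
gives `∑ i, ⟪e, φ i⟫² ≤ ‖e‖² (1 + √S)` for every `e`. By Pythagoras, `N (1 - ε)` is the energy
`∑ i, ‖P_W (φ i)‖²` that `W` captures, and by Parseval this is `∑ k, ∑ i, ⟪b k, φ i⟫²` for an
orthonormal basis `b` of `W`; each of the `r` inner sums is at most `1 + √S`.
-/

open Finset
open scoped RealInnerProductSpace

section

variable {E : Type*} [NormedAddCommGroup E] [InnerProductSpace ℝ E]

theorem Submodule.iInf_norm_sub_sq_eq_norm_sq_sub_norm_starProjection_sq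
    (K : Submodule ℝ E) [K.HasOrthogonalProjection] (x : E) :
    ⨅ g : K, ‖(g : E) - x‖ ^ 2 = ‖x‖ ^ 2 - ‖K.starProjection x‖ ^ 2 := by
  have hmin : ∀ g : K, ‖x - K.starProjection x‖ ≤ ‖(g : E) - x‖ := fun g => by
    rw [K.starProjection_minimal, norm_sub_rev]
    exact ciInf_le ⟨0, by rintro _ ⟨g, rfl⟩; positivity⟩ g
  have hbdd : BddBelow (Set.range fun g : K => ‖(g : E) - x‖ ^ 2) :=
    ⟨0, by rintro _ ⟨g, rfl⟩; positivity⟩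
  have hinf : ⨅ g : K, ‖(g : E) - x‖ ^ 2 = ‖x - K.starProjection x‖ ^ 2 := by
    refine le_antisymm ?_ (le_ciInf fun g => by gcongr; exact hmin g)
    refine (ciInf_le hbdd (K.orthogonalProjectionOnto x)).trans_eq ?_
    rw [norm_sub_rev, K.starProjection_apply]
  rw [hinf, K.norm_sq_eq_add_norm_sq_starProjection x, K.starProjection_orthogonal_val]
  ring

variable {ι : Type*} [Fintype ι] [DecidableEq ι]

def offDiagInnerSqSum (φ : ι → E) : ℝ :=
  ∑ p ∈ (univ : Finset (ι × ι)).filter (fun p => p.1 ≠ p.2), ⟪φ p.1, φ p.2⟫ ^ 2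

theorem norm_sum_smul_sq_le (φ : ι → E) (hφ : ∀ i, ‖φ i‖ ≤ 1) (c : ι → ℝ) :
    ‖∑ i, c i • φ i‖ ^ 2 ≤ (∑ i, c i ^ 2) * (1 + √(offDiagInnerSqSum φ)) := by
  set F := (univ : Finset (ι × ι)).filter (fun p => p.1 ≠ p.2)
  set f : ι × ι → ℝ := fun p => c p.1 * c p.2 * ⟪φ p.1, φ p.2⟫
  have hexpand : ‖∑ i, c i • φ i‖ ^ 2 = ∑ p, f p := by
    rw [← real_inner_self_eq_norm_sq, sum_inner, Fintype.sum_prod_type]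
    simp_rw [inner_sum, real_inner_smul_left, real_inner_smul_right, f]
    ring_nf
  have hdiag : ∑ p ∈ univ.filter (fun p : ι × ι => p.1 = p.2), f p ≤ ∑ i, c i ^ 2 := by
    rw [sum_filter, Fintype.sum_prod_type]
    refine sum_le_sum fun i _ => ?_
    rw [sum_ite_eq]
    simp only [mem_univ, if_true, f, real_inner_self_eq_norm_sq, ← sq]
    exact mul_le_of_le_one_right (sq_nonneg _) (pow_le_one₀ (norm_nonneg _) (hφ i))
  have hprod : ∑ p : ι × ι, (c p.1 * c p.2) ^ 2 = (∑ i, c i ^ 2) ^ 2 := by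
    rw [sq (∑ i, c i ^ 2), sum_mul_sum, Fintype.sum_prod_type]
    simp_rw [mul_pow]
  have hoff : ∑ p ∈ F, f p ≤ (∑ i, c i ^ 2) * √(offDiagInnerSqSum φ) :=
    calc ∑ p ∈ F, f p
        ≤ √(∑ p ∈ F, (c p.1 * c p.2) ^ 2) * √(offDiagInnerSqSum φ) :=
          Real.sum_mul_le_sqrt_mul_sqrt F _ _
      _ ≤ √(∑ p : ι × ι, (c p.1 * c p.2) ^ 2) * √(offDiagInnerSqSum φ) := by
          gcongr
          exact filter_subset _ _
      _ = (∑ i, c i ^ 2) * √(offDiagInnerSqSum φ) := by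
          rw [hprod, Real.sqrt_sq (sum_nonneg fun i _ => sq_nonneg (c i))]
  rw [hexpand, ← sum_filter_add_sum_filter_not univ (fun p : ι × ι => p.1 = p.2)]
  linarith

theorem sum_inner_sq_le (φ : ι → E) (hφ : ∀ i, ‖φ i‖ ≤ 1) (e : E) :
    ∑ i, ⟪e, φ i⟫ ^ 2 ≤ ‖e‖ ^ 2 * (1 + √(offDiagInnerSqSum φ)) := by
  set s := ∑ i, ⟪e, φ i⟫ ^ 2
  set v := ∑ i, ⟪e, φ i⟫ • φ i
  have hs : s = ⟪e, v⟫ := by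
    simp_rw [v, inner_sum, real_inner_smul_right, s, sq]
  have hs_nonneg : 0 ≤ s := sum_nonneg fun i _ => sq_nonneg _
  have hv := norm_sum_smul_sq_le φ hφ (fun i => ⟪e, φ i⟫)
  have hsq : s ^ 2 ≤ s * (‖e‖ ^ 2 * (1 + √(offDiagInnerSqSum φ))) :=
    calc s ^ 2 ≤ (‖e‖ * ‖v‖) ^ 2 := by
          rw [hs]; exact pow_le_pow_left₀ (hs ▸ hs_nonneg) (real_inner_le_norm e v) 2
      _ = ‖e‖ ^ 2 * ‖v‖ ^ 2 := mul_pow _ _ _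
      _ ≤ ‖e‖ ^ 2 * (s * (1 + √(offDiagInnerSqSum φ))) := by gcongr
      _ = s * (‖e‖ ^ 2 * (1 + √(offDiagInnerSqSum φ))) := by ring
  rcases hs_nonneg.eq_or_lt with hs0 | hs0
  · rw [← hs0]; positivity
  · exact le_of_mul_le_mul_left (by rwa [← sq]) hs0

end

theorem dimension_lower_bound_deterministic_general
    {H : Type*} [NormedAddCommGroup H] [InnerProductSpace ℝ H]
    (N : ℕ) (φ : Fin N → H) (hφ : ∀ i, ‖φ i‖ ^ 2 = 1)
    (W : Submodule ℝ H) [FiniteDimensional ℝ W]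
    (r : ℕ) (hr : r = Module.finrank ℝ W)
    (ε : ℝ)
    (hε : ε = (1 / (N : ℝ)) * ∑ i, ⨅ g : W, ‖(g : H) - φ i‖ ^ 2) :
    (r : ℝ) ≥ (N : ℝ) * (1 - ε) /
      (1 + Real.sqrt (∑ p ∈ (univ : Finset (Fin N × Fin N)).filter (fun p => p.1 ≠ p.2),
        ⟪φ p.1, φ p.2⟫ ^ 2)) := by
  have hφ_le : ∀ i, ‖φ i‖ ≤ 1 := fun i =>
    (sq_le_one_iff₀ (norm_nonneg _)).mp (hφ i).le
  set b := stdOrthonormalBasis ℝ W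
  have hcaptured : (N : ℝ) * (1 - ε) = ∑ i, ‖W.starProjection (φ i)‖ ^ 2 := by
    simp_rw [hε, W.iInf_norm_sub_sq_eq_norm_sq_sub_norm_starProjection_sq, hφ, sum_sub_distrib,
      sum_const, card_univ, Fintype.card_fin, nsmul_eq_mul, mul_one]
    rcases N.eq_zero_or_pos with rfl | hN
    · simp
    · field_simp
      ring
  have hparseval : ∀ x : H, ‖W.starProjection x‖ ^ 2 = ∑ k, ⟪(b k : H), x⟫ ^ 2 := fun x => by
    rw [W.starProjection_apply, Submodule.norm_coe, ← b.sum_sq_inner_right]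
    simp
  rw [ge_iff_le, div_le_iff₀ (by positivity)]
  calc (N : ℝ) * (1 - ε) = ∑ k, ∑ i, ⟪(b k : H), φ i⟫ ^ 2 := by
        simp_rw [hcaptured, hparseval]; exact sum_comm
    _ ≤ ∑ k, ‖(b k : H)‖ ^ 2 * (1 + √(offDiagInnerSqSum φ)) :=
        sum_le_sum fun k _ => sum_inner_sq_le φ hφ_le _
    _ = r * (1 + √(offDiagInnerSqSum φ)) := by
        simp [Submodule.norm_coe, b.orthonormal.1, hr, mul_add]

/-- **Dimension lower bound (deterministic case).**
If `φ 1, …, φ N` are unit-norm vectors in a real Hilbert space `H`, `W` is a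
finite-dimensional subspace of `H` with `r = dim W`, and
`ε = (1/N) ∑ i, inf_{g ∈ W} ‖g - φ i‖²`, then
`r ≥ N (1 - ε) / (1 + √(∑_{i ≠ j} ⟨φ i, φ j⟩²))`. -/
theorem dimension_lower_bound_deterministic
    {H : Type*} [NormedAddCommGroup H] [InnerProductSpace ℝ H] [CompleteSpace H]
    (N : ℕ) (φ : Fin N → H) (hφ : ∀ i, ‖φ i‖ ^ 2 = 1)
    (W : Submodule ℝ H) [FiniteDimensional ℝ W]
    (r : ℕ) (hr : r = Module.finrank ℝ W)
    (ε : ℝ)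
    (hε : ε = (1 / (N : ℝ)) * ∑ i, ⨅ g : W, ‖(g : H) - φ i‖ ^ 2) :
    (r : ℝ) ≥ (N : ℝ) * (1 - ε) /
      (1 + Real.sqrt (∑ p ∈ (univ : Finset (Fin N × Fin N)).filter (fun p => p.1 ≠ p.2),
        ⟪φ p.1, φ p.2⟫ ^ 2)) :=
  dimension_lower_bound_deterministic_general N φ hφ W r hr ε hε
end

section
/- Let H be a real Hilbert space and let φ₁, …, φ_N be an orthonormal family in H (i.e., ⟨φ_i, φ_j⟩ = 1 if i = j and 0 otherwise). Let W be a finite-dimensional subspace of H with r := dim(W), and define ε := (1/N) · Σ_{i=1}^N inf_{g ∈ W} ‖g − φ_i‖². Then r ≥ N · (1 − ε). -/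
open Finset
open scoped InnerProductSpace

/-! The squared distance from a unit vector `φ i` to `W` is `1 - ‖P_W (φ i)‖²`, and expanding
`P_W (φ i)` in an orthonormal basis `b` of `W` gives `∑ i, ‖P_W (φ i)‖² = ∑ j, ∑ i, |⟪φ i, b j⟫|²`,
where each inner sum is at most `‖b j‖² = 1` by Bessel's inequality. -/

namespace Submodule

variable {𝕜 E : Type*} [RCLike 𝕜] [NormedAddCommGroup E] [InnerProductSpace 𝕜 E]

theorem iInf_norm_sub_sq_eq_sub_norm_sq_projection (K : Submodule 𝕜 E) [K.HasOrthogonalProjection]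
    (x : E) :
    ⨅ g : K, ‖(g : E) - x‖ ^ 2 = ‖x‖ ^ 2 - ‖K.orthogonalProjectionOnto x‖ ^ 2 := by
  have hmin : ⨅ g : K, ‖(g : E) - x‖ ^ 2 = ‖x - K.starProjection x‖ ^ 2 := by
    refine le_antisymm ?_ (le_ciInf fun g => ?_)
    · rw [norm_sub_rev]
      exact ciInf_le ⟨0, by rintro _ ⟨g, rfl⟩; positivity⟩ (K.orthogonalProjectionOnto x)
    · rw [starProjection_minimal, norm_sub_rev]
      exact pow_le_pow_left₀ (Real.iInf_nonneg fun _ => norm_nonneg _)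
        (ciInf_le ⟨0, by rintro _ ⟨g, rfl⟩; positivity⟩ g) 2
  rw [hmin, K.norm_sq_eq_add_norm_sq_projection x, orthogonalProjectionOnto_orthogonal,
    add_sub_cancel_left]
  rfl

theorem sum_norm_sq_orthogonalProjectionOnto_le_finrank {ι : Type*} [Fintype ι] {v : ι → E}
    (hv : Orthonormal 𝕜 v) (K : Submodule 𝕜 E) [FiniteDimensional 𝕜 K] :
    ∑ i, ‖K.orthogonalProjectionOnto (v i)‖ ^ 2 ≤ Module.finrank 𝕜 K := by
  let b := stdOrthonormalBasis 𝕜 K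
  calc ∑ i, ‖K.orthogonalProjectionOnto (v i)‖ ^ 2
      = ∑ i, ∑ j, ‖⟪v i, (b j : E)⟫_𝕜‖ ^ 2 := by
        refine sum_congr rfl fun i _ => ?_
        rw [← b.sum_sq_norm_inner_right]
        simp only [inner_orthogonalProjectionOnto_eq_of_mem_left, norm_inner_symm]
    _ = ∑ j, ∑ i, ‖⟪v i, (b j : E)⟫_𝕜‖ ^ 2 := sum_comm
    _ ≤ ∑ j, ‖(b j : E)‖ ^ 2 := sum_le_sum fun j _ => hv.sum_inner_products_le _
    _ = Module.finrank 𝕜 K := by simp [norm_coe, b.norm_eq_one]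

end Submodule

theorem dimension_lower_bound_orthonormal_general
    {H : Type*} [NormedAddCommGroup H] [InnerProductSpace ℝ H]
    (N : ℕ) (φ : Fin N → H) (hφ : Orthonormal ℝ φ)
    (W : Submodule ℝ H) [FiniteDimensional ℝ W]
    (r : ℕ) (hr : r = Module.finrank ℝ W)
    (ε : ℝ)
    (hε : ε = (1 / (N : ℝ)) * ∑ i, ⨅ g : W, ‖(g : H) - φ i‖ ^ 2) :
    (r : ℝ) ≥ (N : ℝ) * (1 - ε) := by
  have hdist (i : Fin N) :
      ⨅ g : W, ‖(g : H) - φ i‖ ^ 2 = 1 - ‖W.orthogonalProjectionOnto (φ i)‖ ^ 2 := by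
    rw [W.iInf_norm_sub_sq_eq_sub_norm_sq_projection, hφ.1 i, one_pow]
  have hNε : (N : ℝ) * ε = N - ∑ i, ‖W.orthogonalProjectionOnto (φ i)‖ ^ 2 := by
    rcases eq_or_ne N 0 with rfl | hN
    · simp
    rw [hε, ← mul_assoc, mul_one_div_cancel (by exact_mod_cast hN), one_mul]
    simp [hdist, sum_sub_distrib]
  have hsum := Submodule.sum_norm_sq_orthogonalProjectionOnto_le_finrank hφ W
  rw [hr]
  linarith

/-- **Dimension lower bound (orthonormal case).**
If `φ 1, …, φ N` is an orthonormal family in a real Hilbert space `H`, `W` is a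
finite-dimensional subspace of `H` with `r = dim W`, and
`ε = (1/N) ∑ i, inf_{g ∈ W} ‖g - φ i‖²`, then `r ≥ N (1 - ε)`. -/
theorem dimension_lower_bound_orthonormal
    {H : Type*} [NormedAddCommGroup H] [InnerProductSpace ℝ H] [CompleteSpace H]
    (N : ℕ) (φ : Fin N → H) (hφ : Orthonormal ℝ φ)
    (W : Submodule ℝ H) [FiniteDimensional ℝ W]
    (r : ℕ) (hr : r = Module.finrank ℝ W)
    (ε : ℝ)
    (hε : ε = (1 / (N : ℝ)) * ∑ i, ⨅ g : W, ‖(g : H) - φ i‖ ^ 2) :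
    (r : ℝ) ≥ (N : ℝ) * (1 - ε) :=
  dimension_lower_bound_orthonormal_general N φ hφ W r hr ε hε
end

section
/- (Boas–Bellman inequality) For any elements g, φ₁, …, φ_N of a real inner product space, Σ_{i=1}^N ⟨g, φ_i⟩² ≤ ‖g‖² · ( max_{1 ≤ i ≤ N} ‖φ_i‖² + √(Σ_{i ≠ j} ⟨φ_i, φ_j⟩²) ). -/
open Finset
open scoped RealInnerProductSpace

/-- **Boas–Bellman inequality.**
For any elements `g, φ 1, …, φ N` of a real inner product space,
`∑ i, ⟨g, φ i⟩² ≤ ‖g‖² (max_i ‖φ i‖² + √(∑_{i ≠ j} ⟨φ i, φ j⟩²))`. -/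
theorem boas_bellman
    {E : Type*} [NormedAddCommGroup E] [InnerProductSpace ℝ E]
    (N : ℕ) (hN : 0 < N) (g : E) (φ : Fin N → E) :
    ∑ i, ⟪g, φ i⟫ ^ 2 ≤
      ‖g‖ ^ 2 * ((⨆ i, ‖φ i‖ ^ 2) +
        Real.sqrt (∑ p ∈ (univ : Finset (Fin N × Fin N)).filter (fun p => p.1 ≠ p.2),
          ⟪φ p.1, φ p.2⟫ ^ 2)) := by
  haveI : Nonempty (Fin N) := Fin.pos_iff_nonempty.mp hN
  set a : Fin N → ℝ := fun i => ⟪g, φ i⟫ with ha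
  set S : ℝ := ∑ i, a i ^ 2 with hS
  set M : ℝ := ⨆ i, ‖φ i‖ ^ 2 with hM
  set T : ℝ := ∑ p ∈ (univ : Finset (Fin N × Fin N)).filter (fun p => p.1 ≠ p.2),
    ⟪φ p.1, φ p.2⟫ ^ 2 with hT
  have hMnn : 0 ≤ M := Real.iSup_nonneg fun i => sq_nonneg _
  have hTnn : 0 ≤ T := Finset.sum_nonneg fun p _ => sq_nonneg _
  have hSnn : 0 ≤ S := Finset.sum_nonneg fun i _ => sq_nonneg _
  have hRHSnn : 0 ≤ M + Real.sqrt T := by positivity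
  rcases eq_or_lt_of_le hSnn with h0 | hSpos
  · rw [← h0]; positivity
  -- main case
  set f : E := ∑ i, a i • φ i with hf
  have hgf : ⟪g, f⟫ = S := by
    simp [hf, inner_sum, real_inner_smul_right, hS, sq, ha]
  have hff : ⟪f, f⟫ = ∑ i, ∑ j, a i * a j * ⟪φ i, φ j⟫ := by
    simp only [hf, inner_sum, sum_inner, real_inner_smul_right, real_inner_smul_left]
    refine Finset.sum_congr rfl fun i _ => Finset.sum_congr rfl fun j _ => ?_
    rw [real_inner_comm]; ring
  -- split diagonal and off-diagonal
  have hsplit : ⟪f, f⟫ = (∑ i, a i ^ 2 * ‖φ i‖ ^ 2)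
      + ∑ p ∈ (univ : Finset (Fin N × Fin N)).filter (fun p => p.1 ≠ p.2),
          a p.1 * a p.2 * ⟪φ p.1, φ p.2⟫ := by
    rw [hff, ← Finset.sum_product', Finset.univ_product_univ,
      ← Finset.sum_filter_add_sum_filter_not (univ : Finset (Fin N × Fin N))
        (fun p => p.1 = p.2)]
    congr 1
    · rw [Finset.sum_filter, Fintype.sum_prod_type]
      simp only [Finset.sum_ite_eq, Finset.mem_univ, if_true]
      refine Finset.sum_congr rfl fun i _ => ?_
      rw [real_inner_self_eq_norm_sq]; ring
  have hdiag : (∑ i, a i ^ 2 * ‖φ i‖ ^ 2) ≤ S * M := by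
    rw [hS, Finset.sum_mul]
    refine Finset.sum_le_sum fun i _ => ?_
    have : ‖φ i‖ ^ 2 ≤ M :=
      le_ciSup (f := fun j => ‖φ j‖ ^ 2)
        (Set.Finite.bddAbove (Set.finite_range _)) i
    exact mul_le_mul_of_nonneg_left this (sq_nonneg _)
  have hoff : (∑ p ∈ (univ : Finset (Fin N × Fin N)).filter (fun p => p.1 ≠ p.2),
      a p.1 * a p.2 * ⟪φ p.1, φ p.2⟫) ≤ S * Real.sqrt T := by
    set s := (univ : Finset (Fin N × Fin N)).filter (fun p => p.1 ≠ p.2)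
    have hcs := Finset.sum_mul_sq_le_sq_mul_sq s (fun p => a p.1 * a p.2)
      (fun p => ⟪φ p.1, φ p.2⟫)
    have hA : (∑ p ∈ s, (a p.1 * a p.2) ^ 2) ≤ S ^ 2 := by
      have : S ^ 2 = ∑ p ∈ (univ : Finset (Fin N × Fin N)), (a p.1 * a p.2) ^ 2 := by
        rw [hS, sq, Finset.sum_mul_sum, ← Finset.sum_product']
        apply Finset.sum_congr rfl; intro p _; ring
      rw [this]
      exact Finset.sum_le_sum_of_subset_of_nonneg (Finset.filter_subset _ _)
        fun p _ _ => sq_nonneg _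
    calc (∑ p ∈ s, a p.1 * a p.2 * ⟪φ p.1, φ p.2⟫)
        ≤ Real.sqrt ((∑ p ∈ s, a p.1 * a p.2 * ⟪φ p.1, φ p.2⟫) ^ 2) := by
          rw [Real.sqrt_sq_eq_abs]; exact le_abs_self _
      _ ≤ Real.sqrt ((∑ p ∈ s, (a p.1 * a p.2) ^ 2) * T) :=
          Real.sqrt_le_sqrt hcs
      _ ≤ Real.sqrt (S ^ 2 * T) := by
          apply Real.sqrt_le_sqrt
          exact mul_le_mul_of_nonneg_right hA hTnn
      _ = S * Real.sqrt T := by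
          rw [Real.sqrt_mul (sq_nonneg _), Real.sqrt_sq hSnn]
  have hcs2 : S ^ 2 ≤ ‖g‖ ^ 2 * ⟪f, f⟫ := by
    have := real_inner_mul_inner_self_le g f
    rw [hgf, real_inner_self_eq_norm_sq] at this
    calc S ^ 2 = S * S := sq S
      _ ≤ ‖g‖ ^ 2 * ⟪f, f⟫ := this
  have hkey : S ^ 2 ≤ ‖g‖ ^ 2 * (S * (M + Real.sqrt T)) := by
    calc S ^ 2 ≤ ‖g‖ ^ 2 * ⟪f, f⟫ := hcs2
      _ ≤ ‖g‖ ^ 2 * (S * M + S * Real.sqrt T) := by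
          rw [hsplit]
          exact mul_le_mul_of_nonneg_left (add_le_add hdiag hoff) (sq_nonneg _)
      _ = ‖g‖ ^ 2 * (S * (M + Real.sqrt T)) := by ring
  have : S * S ≤ S * (‖g‖ ^ 2 * (M + Real.sqrt T)) := by
    calc S * S = S ^ 2 := (sq S).symm
      _ ≤ ‖g‖ ^ 2 * (S * (M + Real.sqrt T)) := hkey
      _ = S * (‖g‖ ^ 2 * (M + Real.sqrt T)) := by ring
  exact le_of_mul_le_mul_left this hSpos
end

section
/- Let H be a real Hilbert space, let u₁, …, u_d be an orthonormal family in H, and let φ₁, …, φ_N ∈ H satisfy ‖φ_i‖² = 1 for all i. Then Σ_{k=1}^d Σ_{i=1}^N ⟨u_k, φ_i⟩² ≤ d · ( 1 + √(Σ_{i ≠ j} ⟨φ_i, φ_j⟩²) ). -/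
/-! Boas–Bellman: for `v = ∑ ⟪x, φ i⟫ • φ i` and `S = ∑ ⟪x, φ i⟫²` we have `S = ⟪x, v⟫ ≤ ‖x‖ ‖v‖`,
while expanding `‖v‖²` into its diagonal part `S` and its off-diagonal part, and bounding the latter
by Cauchy–Schwarz over the off-diagonal pairs, gives `‖v‖² ≤ S (1 + √(∑_{i ≠ j} ⟪φ i, φ j⟫²))`.
Hence `S ≤ ‖x‖² (1 + √(∑_{i ≠ j} ⟪φ i, φ j⟫²))`; summing over an orthonormal family gives the
theorem. -/

open Finset
open scoped RealInnerProductSpace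

lemma Finset.sum_offDiag_mul_mul_le {ι : Type*} (s : Finset ι) (c : ι → ℝ) (a : ι × ι → ℝ) :
    ∑ p ∈ s.offDiag, c p.1 * c p.2 * a p ≤
      (∑ i ∈ s, c i ^ 2) * √(∑ p ∈ s.offDiag, a p ^ 2) := by
  classical
  have h_product : ∑ p ∈ s ×ˢ s, (c p.1 * c p.2) ^ 2 = (∑ i ∈ s, c i ^ 2) ^ 2 := by
    simp_rw [sum_product, sq (∑ i ∈ s, c i ^ 2), sum_mul_sum, mul_pow]
  have h_offDiag : ∑ p ∈ s.offDiag, (c p.1 * c p.2) ^ 2 ≤ (∑ i ∈ s, c i ^ 2) ^ 2 :=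
    h_product ▸ sum_le_sum_of_subset_of_nonneg (diag_union_offDiag s ▸ subset_union_right)
      fun _ _ _ => sq_nonneg _
  calc ∑ p ∈ s.offDiag, c p.1 * c p.2 * a p
      ≤ √(∑ p ∈ s.offDiag, (c p.1 * c p.2) ^ 2) * √(∑ p ∈ s.offDiag, a p ^ 2) :=
        Real.sum_mul_le_sqrt_mul_sqrt _ _ _
    _ ≤ (∑ i ∈ s, c i ^ 2) * √(∑ p ∈ s.offDiag, a p ^ 2) := by
        gcongr
        exact (Real.sqrt_le_sqrt h_offDiag).trans_eq <|
          Real.sqrt_sq <| sum_nonneg fun _ _ => sq_nonneg _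

section BoasBellman

variable {ι H : Type*} [Fintype ι] [NormedAddCommGroup H] [InnerProductSpace ℝ H]

lemma norm_sum_smul_sq (c : ι → ℝ) (φ : ι → H) :
    ‖∑ i, c i • φ i‖ ^ 2 = ∑ p ∈ univ ×ˢ univ, c p.1 * c p.2 * ⟪φ p.1, φ p.2⟫ := by
  simp_rw [← real_inner_self_eq_norm_sq, sum_inner, inner_sum, real_inner_smul_left,
    real_inner_smul_right, sum_product]
  exact sum_congr rfl fun _ _ => sum_congr rfl fun _ _ => by ring

variable [DecidableEq ι]

lemma norm_sum_smul_sq_eq_sum_sq_add_offDiag (c : ι → ℝ) (φ : ι → H)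
    (hφ : ∀ i, ‖φ i‖ ^ 2 = 1) :
    ‖∑ i, c i • φ i‖ ^ 2 =
      ∑ i, c i ^ 2 + ∑ p ∈ univ.offDiag, c p.1 * c p.2 * ⟪φ p.1, φ p.2⟫ := by
  rw [norm_sum_smul_sq, ← diag_union_offDiag, sum_union (disjoint_diag_offDiag _), sum_diag]
  simp_rw [real_inner_self_eq_norm_sq, hφ, mul_one, sq]

theorem sum_real_inner_sq_le_boas_bellman (x : H) (φ : ι → H) (hφ : ∀ i, ‖φ i‖ ^ 2 = 1) :
    ∑ i, ⟪x, φ i⟫ ^ 2 ≤ ‖x‖ ^ 2 * (1 + √(∑ p ∈ univ.offDiag, ⟪φ p.1, φ p.2⟫ ^ 2)) := by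
  set c := fun i => ⟪x, φ i⟫
  set S := ∑ i, c i ^ 2
  set v := ∑ i, c i • φ i
  have h_inner : ⟪x, v⟫ = S := by
    simp_rw [v, S, inner_sum, real_inner_smul_right, sq]
    rfl
  have h_norm_v : ‖v‖ ^ 2 ≤ S * (1 + √(∑ p ∈ univ.offDiag, ⟪φ p.1, φ p.2⟫ ^ 2)) := by
    rw [norm_sum_smul_sq_eq_sum_sq_add_offDiag c φ hφ, mul_one_add]
    gcongr
    exact sum_offDiag_mul_mul_le univ c fun p => ⟪φ p.1, φ p.2⟫
  have h_sq : S ^ 2 ≤ ‖x‖ ^ 2 * ‖v‖ ^ 2 := by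
    rw [← mul_pow, ← h_inner]
    exact sq_le_sq' (neg_le_of_abs_le (abs_real_inner_le_norm x v)) (real_inner_le_norm x v)
  have hS_nonneg : 0 ≤ S := sum_nonneg fun i _ => sq_nonneg (c i)
  rcases hS_nonneg.eq_or_lt with hS | hS
  · rw [← hS]
    positivity
  · refine le_of_mul_le_mul_left ?_ hS
    calc S * S = S ^ 2 := (sq S).symm
      _ ≤ ‖x‖ ^ 2 * ‖v‖ ^ 2 := h_sq
      _ ≤ ‖x‖ ^ 2 * (S * (1 + √(∑ p ∈ univ.offDiag, ⟪φ p.1, φ p.2⟫ ^ 2))) := by gcongr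
      _ = S * (‖x‖ ^ 2 * (1 + √(∑ p ∈ univ.offDiag, ⟪φ p.1, φ p.2⟫ ^ 2))) := by ring

end BoasBellman

theorem orthonormal_family_inner_sum_bound_general
    {H : Type*} [NormedAddCommGroup H] [InnerProductSpace ℝ H]
    (d N : ℕ) (u : Fin d → H) (hu : Orthonormal ℝ u)
    (φ : Fin N → H) (hφ : ∀ i, ‖φ i‖ ^ 2 = 1) :
    ∑ k, ∑ i, ⟪u k, φ i⟫ ^ 2 ≤
      (d : ℝ) * (1 + Real.sqrt (∑ p ∈ (univ : Finset (Fin N × Fin N)).filter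
        (fun p => p.1 ≠ p.2), ⟪φ p.1, φ p.2⟫ ^ 2)) := by
  have h_offDiag : (univ : Finset (Fin N × Fin N)).filter (fun p => p.1 ≠ p.2) = univ.offDiag := by
    ext
    simp
  rw [h_offDiag]
  calc ∑ k, ∑ i, ⟪u k, φ i⟫ ^ 2
      ≤ ∑ _k : Fin d, (1 + √(∑ p ∈ univ.offDiag, ⟪φ p.1, φ p.2⟫ ^ 2)) :=
        sum_le_sum fun k _ => by
          simpa [hu.1 k] using sum_real_inner_sq_le_boas_bellman (u k) φ hφ
    _ = d * (1 + √(∑ p ∈ univ.offDiag, ⟪φ p.1, φ p.2⟫ ^ 2)) := by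
        rw [sum_const, card_univ, Fintype.card_fin, nsmul_eq_mul]

/-- **Key intermediate inequality in the proof of the dimension lower bound.**
If `u 1, …, u d` is an orthonormal family in a real Hilbert space `H` and
`φ 1, …, φ N` are unit-norm vectors in `H`, then
`∑ k, ∑ i, ⟨u k, φ i⟩² ≤ d (1 + √(∑_{i ≠ j} ⟨φ i, φ j⟩²))`. -/
theorem orthonormal_family_inner_sum_bound
    {H : Type*} [NormedAddCommGroup H] [InnerProductSpace ℝ H] [CompleteSpace H]
    (d N : ℕ) (u : Fin d → H) (hu : Orthonormal ℝ u)
    (φ : Fin N → H) (hφ : ∀ i, ‖φ i‖ ^ 2 = 1) :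
    ∑ k, ∑ i, ⟪u k, φ i⟫ ^ 2 ≤
      (d : ℝ) * (1 + Real.sqrt (∑ p ∈ (univ : Finset (Fin N × Fin N)).filter
        (fun p => p.1 ≠ p.2), ⟪φ p.1, φ p.2⟫ ^ 2)) :=
  orthonormal_family_inner_sum_bound_general d N u hu φ hφ
end

section
/- Let (X, P) be a probability space, let x₁, …, x_n ∈ X be fixed points, let K : X × X → ℝ be a function such that each section x ↦ K(x, x_i) belongs to L²(P), and let φ₁, …, φ_N be an orthonormal family in L²(P). Suppose that for every i ∈ {1, …, N} there exist coefficients α₁, …, α_n ∈ ℝ such that the function x ↦ Σ_{j=1}^n α_j K(x, x_j) satisfies ‖Σ_{j=1}^n α_j K(·, x_j) − φ_i‖²_{L²(P)} ≤ ε_i, where (1/N)·Σ_{i=1}^N ε_i ≤ ε. Then n ≥ (1 − ε) · N. -/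
open Finset MeasureTheory Module
open scoped InnerProductSpace

/-! An orthonormal family `φ₁, …, φ_N` has total squared projection at most `dim U` onto any
finite-dimensional subspace `U` (expand each projection in an orthonormal basis of `U`, swap the
sums and apply Bessel's inequality to each basis vector). If every `φᵢ` lies within squared
distance `εᵢ` of `U`, Pythagoras makes its squared projection at least `1 - εᵢ`, so
`N - ∑ εᵢ ≤ dim U`; here `U` is the span of the `n` kernel sections. -/

section

variable {𝕜 E ι : Type*} [RCLike 𝕜] [NormedAddCommGroup E] [InnerProductSpace 𝕜 E]

theorem Submodule.norm_sq_le_norm_starProjection_sq_add_norm_sub_sq (U : Submodule 𝕜 E)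
    [U.HasOrthogonalProjection] (x : E) {w : E} (hw : w ∈ U) :
    ‖x‖ ^ 2 ≤ ‖U.starProjection x‖ ^ 2 + ‖x - w‖ ^ 2 := by
  have hmin : ‖x - U.starProjection x‖ ≤ ‖x - w‖ := by
    rw [U.starProjection_minimal]
    exact ciInf_le ⟨0, Set.forall_mem_range.2 fun _ => norm_nonneg _⟩ (⟨w, hw⟩ : U)
  have hpyth := U.norm_sq_eq_add_norm_sq_starProjection x
  rw [U.starProjection_orthogonal, sub_apply, ContinuousLinearMap.id_apply] at hpyth
  rw [hpyth]
  gcongr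

theorem Orthonormal.sum_norm_sq_starProjection_le_finrank [Fintype ι] {v : ι → E}
    (hv : Orthonormal 𝕜 v) (U : Submodule 𝕜 E) [FiniteDimensional 𝕜 U] :
    ∑ i, ‖U.starProjection (v i)‖ ^ 2 ≤ finrank 𝕜 U := by
  set b := stdOrthonormalBasis 𝕜 U
  have hexpand : ∀ i, ‖U.starProjection (v i)‖ ^ 2 = ∑ k, ‖⟪v i, (b k : E)⟫_𝕜‖ ^ 2 := by
    intro i
    rw [U.starProjection_apply, Submodule.norm_coe, ← b.sum_sq_norm_inner_right]
    simp_rw [Submodule.inner_orthogonalProjectionOnto_eq_of_mem_left, norm_inner_symm]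
  calc ∑ i, ‖U.starProjection (v i)‖ ^ 2
      = ∑ k, ∑ i, ‖⟪v i, (b k : E)⟫_𝕜‖ ^ 2 := by simp_rw [hexpand]; exact sum_comm
    _ ≤ ∑ k, ‖(b k : E)‖ ^ 2 := by
        gcongr with k
        exact hv.sum_inner_products_le _
    _ = finrank 𝕜 U := by simp [Submodule.norm_coe, b.orthonormal.1]

theorem Orthonormal.card_sub_sum_le_finrank_of_sq_dist_le [Fintype ι] {v : ι → E}
    (hv : Orthonormal 𝕜 v) (U : Submodule 𝕜 E) [FiniteDimensional 𝕜 U] (ε : ι → ℝ)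
    (happrox : ∀ i, ∃ w ∈ U, ‖w - v i‖ ^ 2 ≤ ε i) :
    (Fintype.card ι : ℝ) - ∑ i, ε i ≤ finrank 𝕜 U := by
  have hproj : ∀ i, 1 - ε i ≤ ‖U.starProjection (v i)‖ ^ 2 := by
    intro i
    obtain ⟨w, hwU, hw⟩ := happrox i
    have := U.norm_sq_le_norm_starProjection_sq_add_norm_sub_sq (v i) hwU
    rw [hv.1 i, norm_sub_rev] at this
    linarith
  calc (Fintype.card ι : ℝ) - ∑ i, ε i = ∑ i, (1 - ε i) := by simp
    _ ≤ ∑ i, ‖U.starProjection (v i)‖ ^ 2 := sum_le_sum fun i _ => hproj i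
    _ ≤ finrank 𝕜 U := hv.sum_norm_sq_starProjection_le_finrank U

end

theorem kernel_method_sample_lower_bound_general
    {X : Type*} [MeasurableSpace X] (P : Measure X)
    (n N : ℕ) (xs : Fin n → X) (K : X → X → ℝ)
    (hK : ∀ j, MemLp (fun x => K x (xs j)) 2 P)
    (φ : Fin N → Lp ℝ 2 P) (hφ : Orthonormal ℝ φ)
    (εi : Fin N → ℝ) (ε : ℝ)
    (happrox : ∀ i, ∃ α : Fin n → ℝ,
      ‖(∑ j, α j • (hK j).toLp (fun x => K x (xs j))) - φ i‖ ^ 2 ≤ εi i)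
    (hε : (1 / (N : ℝ)) * ∑ i, εi i ≤ ε) :
    (n : ℝ) ≥ (1 - ε) * (N : ℝ) := by
  obtain rfl | hN := N.eq_zero_or_pos
  · simp
  set f : Fin n → Lp ℝ 2 P := fun j => (hK j).toLp (fun x => K x (xs j))
  set U := Submodule.span ℝ (Set.range f)
  have : FiniteDimensional ℝ U := FiniteDimensional.span_of_finite ℝ (Set.finite_range f)
  have hdim : (finrank ℝ U : ℝ) ≤ n := by
    exact_mod_cast (finrank_range_le_card (R := ℝ) f).trans_eq (Fintype.card_fin n)
  have hbound := hφ.card_sub_sum_le_finrank_of_sq_dist_le U εi fun i => by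
    obtain ⟨α, hα⟩ := happrox i
    exact ⟨_, Submodule.sum_mem _ fun j _ => U.smul_mem _ (Submodule.subset_span ⟨j, rfl⟩), hα⟩
  have hsum : ∑ i, εi i ≤ ε * N := by
    rwa [one_div, inv_mul_le_iff₀ (by exact_mod_cast hN), mul_comm] at hε
  rw [Fintype.card_fin] at hbound
  linarith

/-- **Sample size lower bound for kernel methods (fixed points).**
Let `P` be a probability measure on `X`, let `x 1, …, x n ∈ X` be fixed points,
let `K : X × X → ℝ` be a kernel whose sections `x ↦ K x (xs j)` lie in `L²(P)`,
and let `φ 1, …, φ N` be an orthonormal family in `L²(P)`.  If for every `i`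
some linear combination `x ↦ ∑ j, α j * K x (xs j)` approximates `φ i` within
squared `L²`-error `εi i`, where `(1/N) ∑ i, εi i ≤ ε`, then `n ≥ (1 - ε) N`. -/
theorem kernel_method_sample_lower_bound
    {X : Type*} [MeasurableSpace X] (P : Measure X) [IsProbabilityMeasure P]
    (n N : ℕ) (xs : Fin n → X) (K : X → X → ℝ)
    (hK : ∀ j, MemLp (fun x => K x (xs j)) 2 P)
    (φ : Fin N → Lp ℝ 2 P) (hφ : Orthonormal ℝ φ)
    (εi : Fin N → ℝ) (ε : ℝ)
    (happrox : ∀ i, ∃ α : Fin n → ℝ,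
      ‖(∑ j, α j • (hK j).toLp (fun x => K x (xs j))) - φ i‖ ^ 2 ≤ εi i)
    (hε : (1 / (N : ℝ)) * ∑ i, εi i ≤ ε) :
    (n : ℝ) ≥ (1 - ε) * (N : ℝ) :=
  kernel_method_sample_lower_bound_general P n N xs K hK φ hφ εi ε happrox hε
end

section
/- Let P be the uniform probability distribution on the discrete hypercube {−1, 1}^d, and for each subset S ⊆ {1, …, d} let χ_S : {−1, 1}^d → ℝ be the parity function χ_S(x) = ∏_{j ∈ S} x_j. Let W be a finite-dimensional subspace of L²(P) such that (1/2^d) · Σ_{S ⊆ {1,…,d}} inf_{g ∈ W} ‖g − χ_S‖²_{L²(P)} ≤ ε. Then dim(W) ≥ (1 − ε) · 2^d. -/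
/-!
Under the uniform measure the parity functions form an orthonormal family of `2^d` vectors.
For any orthonormal family `(e i)` and finite-dimensional subspace `W`, the squared distance
from `e i` to `W` is `1 - ‖P_W e i‖²`, and by Bessel's inequality applied to an orthonormal basis
`(b j)` of `W`, `∑ i ‖P_W e i‖² = ∑ j ∑ i ⟪e i, b j⟫² ≤ ∑ j ‖b j‖² = dim W`. Hence the total
squared approximation error is at least `2^d - dim W`.
-/

open Finset MeasureTheory

/-- The sign group `ℤˣ = {1, -1}` models the two-point set `{-1, 1}`. -/
noncomputable instance : MeasurableSpace ℤˣ := ⊤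

open scoped RealInnerProductSpace

section Projection

variable {E : Type*} [NormedAddCommGroup E] [InnerProductSpace ℝ E]

theorem Submodule.norm_sub_starProjection_sq (K : Submodule ℝ E) [K.HasOrthogonalProjection]
    (x : E) : ‖x - K.starProjection x‖ ^ 2 = ‖x‖ ^ 2 - ‖K.starProjection x‖ ^ 2 := by
  rw [K.norm_sq_eq_add_norm_sq_starProjection x, K.starProjection_orthogonal_val]
  ring

theorem Submodule.norm_sub_starProjection_sq_le_iInf (K : Submodule ℝ E)
    [K.HasOrthogonalProjection] (x : E) :
    ‖x - K.starProjection x‖ ^ 2 ≤ ⨅ g : K, ‖(g : E) - x‖ ^ 2 := by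
  refine le_ciInf fun g => ?_
  rw [K.starProjection_minimal, norm_sub_rev]
  gcongr
  · exact Real.iInf_nonneg fun _ => norm_nonneg _
  · exact ciInf_le ⟨0, Set.forall_mem_range.2 fun _ => norm_nonneg _⟩ g

theorem Submodule.norm_starProjection_sq_eq_sum {ι : Type*} [Fintype ι] (K : Submodule ℝ E)
    [K.HasOrthogonalProjection] (b : OrthonormalBasis ι ℝ K) (x : E) :
    ‖K.starProjection x‖ ^ 2 = ∑ j, ⟪(b j : E), x⟫ ^ 2 := by
  rw [K.starProjection_apply, Submodule.norm_coe, ← b.sum_sq_inner_right]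
  simp

theorem Orthonormal.sum_norm_starProjection_sq_le_finrank {ι : Type*} [Fintype ι] {e : ι → E}
    (he : Orthonormal ℝ e) (K : Submodule ℝ E) [FiniteDimensional ℝ K] :
    ∑ i, ‖K.starProjection (e i)‖ ^ 2 ≤ Module.finrank ℝ K := by
  let b := stdOrthonormalBasis ℝ K
  calc ∑ i, ‖K.starProjection (e i)‖ ^ 2 = ∑ j, ∑ i, ‖⟪e i, (b j : E)⟫‖ ^ 2 := by
        simp_rw [K.norm_starProjection_sq_eq_sum b, Real.norm_eq_abs, sq_abs, real_inner_comm]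
        exact sum_comm
    _ ≤ ∑ j, ‖(b j : E)‖ ^ 2 := sum_le_sum fun j _ => he.sum_inner_products_le _
    _ = Module.finrank ℝ K := by simp [Submodule.norm_coe, b.orthonormal.1]

theorem Orthonormal.card_sub_finrank_le_sum_iInf_norm_sub_sq {ι : Type*} [Fintype ι]
    {e : ι → E} (he : Orthonormal ℝ e) (K : Submodule ℝ E) [FiniteDimensional ℝ K] :
    (Fintype.card ι : ℝ) - Module.finrank ℝ K ≤ ∑ i, ⨅ g : K, ‖(g : E) - e i‖ ^ 2 :=
  calc (Fintype.card ι : ℝ) - Module.finrank ℝ K ≤ ∑ i, (1 - ‖K.starProjection (e i)‖ ^ 2) := by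
        rw [sum_sub_distrib, sum_const, card_univ, nsmul_one]
        linarith [he.sum_norm_starProjection_sq_le_finrank K]
    _ = ∑ i, ‖e i - K.starProjection (e i)‖ ^ 2 := by
        simp [K.norm_sub_starProjection_sq, he.1]
    _ ≤ ∑ i, ⨅ g : K, ‖(g : E) - e i‖ ^ 2 :=
        sum_le_sum fun i _ => K.norm_sub_starProjection_sq_le_iInf _

end Projection

def parity {ι : Type*} (S : Finset ι) (x : ι → ℤˣ) : ℝ := ∏ j ∈ S, ((x j : ℤ) : ℝ)

section Parity

variable {ι : Type*}

theorem parity_mul (S : Finset ι) (x y : ι → ℤˣ) :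
    parity S (x * y) = parity S x * parity S y := by
  simp [parity, prod_mul_distrib]

theorem parity_mul_self (S : Finset ι) (x : ι → ℤˣ) : parity S x * parity S x = 1 := by
  rw [← parity_mul]
  simp [parity, Int.units_mul_self]

theorem parity_mulSingle_neg_one [DecidableEq ι] (S : Finset ι) (j : ι) :
    parity S (Pi.mulSingle j (-1)) = if j ∈ S then -1 else 1 := by
  simp [parity, Pi.mulSingle_apply, apply_ite (fun u : ℤˣ => ((u : ℤ) : ℝ))]

variable [Fintype ι] [DecidableEq ι]

theorem sum_parity_mul_parity (S T : Finset ι) :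
    ∑ x, parity S x * parity T x = if S = T then 2 ^ Fintype.card ι else 0 := by
  split_ifs with hST
  · subst hST
    simp [parity_mul_self]
  · obtain ⟨j, hj⟩ : ∃ j, ¬(j ∈ S ↔ j ∈ T) := by simpa [Finset.ext_iff] using hST
    -- flipping the sign of `x j` for `j ∈ S ∆ T` negates the summand
    set f : (ι → ℤˣ) → ℝ := fun x => parity S x * parity T x
    have hflip : ∀ x, f (Pi.mulSingle j (-1) * x) = -f x := by
      intro x
      simp only [f, parity_mul, parity_mulSingle_neg_one]
      by_cases hS : j ∈ S <;> by_cases hT : j ∈ T <;> simp_all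
    have hneg : ∑ x, f x = -∑ x, f x := by
      rw [← sum_neg_distrib, ← Equiv.sum_comp (Equiv.mulLeft (Pi.mulSingle j (-1))) f]
      exact sum_congr rfl fun x _ => hflip x
    linarith

theorem orthonormal_of_ae_eq_parity
    (χ : Finset ι → Lp ℝ 2 (PMF.uniformOfFintype (ι → ℤˣ)).toMeasure)
    (hχ : ∀ S, χ S =ᵐ[(PMF.uniformOfFintype (ι → ℤˣ)).toMeasure] parity S) :
    Orthonormal ℝ χ := by
  rw [orthonormal_iff_ite]
  intro S T
  have hprod : (fun x => ⟪(χ S : (ι → ℤˣ) → ℝ) x, (χ T : (ι → ℤˣ) → ℝ) x⟫)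
      =ᵐ[(PMF.uniformOfFintype (ι → ℤˣ)).toMeasure] fun x => parity S x * parity T x := by
    filter_upwards [hχ S, hχ T] with x hS hT
    simp [hS, hT, mul_comm]
  rw [L2.inner_def, integral_congr_ae hprod, PMF.integral_eq_sum]
  simp [PMF.uniformOfFintype_apply, ← mul_sum, sum_parity_mul_parity]

end Parity

/-- **Lower bound for linear methods approximating parity functions.**
Let `P` be the uniform probability distribution on the hypercube `{-1,1}^d`
(modeled as `Fin d → ℤˣ`), and for `S ⊆ {1,…,d}` let `χ S ∈ L²(P)` be the
parity function `x ↦ ∏_{j ∈ S} x j`.  If `W` is a finite-dimensional subspace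
of `L²(P)` with `(1/2^d) ∑_S inf_{g ∈ W} ‖g - χ S‖² ≤ ε`, then
`dim W ≥ (1 - ε) 2^d`. -/
theorem parity_dimension_lower_bound
    (d : ℕ) (P : Measure (Fin d → ℤˣ))
    (hP : P = (PMF.uniformOfFintype (Fin d → ℤˣ)).toMeasure)
    (χ : Finset (Fin d) → Lp ℝ 2 P)
    (hχ : ∀ S : Finset (Fin d),
      (χ S : (Fin d → ℤˣ) → ℝ) =ᵐ[P] fun x => ∏ j ∈ S, ((x j : ℤ) : ℝ))
    (W : Submodule ℝ (Lp ℝ 2 P)) [FiniteDimensional ℝ W]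
    (ε : ℝ)
    (hε : (1 / (2 ^ d : ℝ)) *
        ∑ S : Finset (Fin d), ⨅ g : W, ‖(g : Lp ℝ 2 P) - χ S‖ ^ 2 ≤ ε) :
    (Module.finrank ℝ W : ℝ) ≥ (1 - ε) * 2 ^ d := by
  subst hP
  have hbound := (orthonormal_of_ae_eq_parity χ hχ).card_sub_finrank_le_sum_iInf_norm_sub_sq W
  have hcard : (Fintype.card (Finset (Fin d)) : ℝ) = 2 ^ d := by simp
  rw [one_div, inv_mul_le_iff₀ (by positivity)] at hε
  linarith
end

section
/- Let (X, P) be a probability space, let (Ω, F, ℙ) be a probability space, let K : X × X → ℝ be a function, and let x₁, …, x_n : Ω → X be random points such that each section x ↦ K(x, x_i(ω)) belongs to L²(P) for ℙ-almost every ω. Let φ₁, …, φ_N be an orthonormal family in L²(P), and for each i let W(ω) denote the span of the functions K(·, x₁(ω)), …, K(·, x_n(ω)) in L²(P), assuming ω ↦ inf_{g ∈ W(ω)} ‖g − φ_i‖²_{L²(P)} is measurable for each i. If (1/N) · Σ_{i=1}^N E_ω[ inf_{g ∈ W(ω)} ‖g − φ_i‖²_{L²(P)} ] ≤ ε, then n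 ≥ (1 − ε) · N. -/
/-!
Fix `ω` outside a null set; then `W ω` is spanned by `n` vectors, so it has dimension `d ≤ n`.
With `π` the orthogonal projection onto a `d`-dimensional subspace, the best approximation error
of a unit vector `v` is at least `1 - ‖π v‖²`, and for an orthonormal family `∑ ‖π vᵢ‖² ≤ d`:
expanding `π vᵢ` in an orthonormal basis `(b_k)` of the subspace turns the sum into
`∑_k ∑_i ⟪b_k, vᵢ⟫²`, and Bessel's inequality bounds each inner sum by `‖b_k‖² = 1`.
So the errors sum to at least `N - n` almost surely, hence also in expectation.
-/

open Finset MeasureTheory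
open scoped RealInnerProductSpace

namespace Submodule

variable {E : Type*} [NormedAddCommGroup E] [InnerProductSpace ℝ E] (K : Submodule ℝ E)

theorem iInf_norm_sub_sq_nonneg (x : E) : 0 ≤ ⨅ g : K, ‖(g : E) - x‖ ^ 2 :=
  Real.iInf_nonneg fun _ => by positivity

theorem iInf_norm_sub_sq_le_norm_sq (x : E) : ⨅ g : K, ‖(g : E) - x‖ ^ 2 ≤ ‖x‖ ^ 2 := by
  have := ciInf_le (f := fun g : K => ‖(g : E) - x‖ ^ 2) ⟨0, by rintro _ ⟨g, rfl⟩; positivity⟩ 0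
  simpa using this

theorem norm_sq_sub_norm_sq_starProjection_le_iInf [K.HasOrthogonalProjection] (x : E) :
    ‖x‖ ^ 2 - ‖K.starProjection x‖ ^ 2 ≤ ⨅ g : K, ‖(g : E) - x‖ ^ 2 := by
  refine le_ciInf fun g => ?_
  have hmin : ‖x - K.starProjection x‖ ≤ ‖x - g‖ := by
    rw [starProjection_minimal]
    exact ciInf_le ⟨0, by rintro _ ⟨g, rfl⟩; positivity⟩ g
  rw [K.norm_sq_eq_add_norm_sq_starProjection x, starProjection_orthogonal_val,
    norm_sub_rev (g : E)]
  nlinarith [norm_nonneg (x - K.starProjection x)]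

theorem sum_norm_sq_starProjection_le_finrank [FiniteDimensional ℝ K] {ι : Type*} [Fintype ι]
    {v : ι → E} (hv : Orthonormal ℝ v) :
    ∑ i, ‖K.starProjection (v i)‖ ^ 2 ≤ Module.finrank ℝ K := by
  let b := stdOrthonormalBasis ℝ K
  have hparseval : ∀ x, ‖K.starProjection x‖ ^ 2 = ∑ k, ⟪(b k : E), x⟫ ^ 2 := fun x => by
    rw [starProjection_apply, norm_coe, ← b.sum_sq_norm_inner_right]
    refine sum_congr rfl fun k _ => ?_
    rw [inner_orthogonalProjectionOnto_eq_of_mem_left, Real.norm_eq_abs, sq_abs]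
  calc ∑ i, ‖K.starProjection (v i)‖ ^ 2 = ∑ k, ∑ i, ‖⟪v i, (b k : E)⟫‖ ^ 2 := by
        simp only [hparseval, Real.norm_eq_abs, sq_abs, real_inner_comm]
        exact sum_comm
    _ ≤ ∑ k, ‖(b k : E)‖ ^ 2 := sum_le_sum fun k _ => hv.sum_inner_products_le _
    _ = Module.finrank ℝ K := by simp [norm_coe, b.orthonormal.1]

theorem _root_.Orthonormal.card_sub_finrank_le_sum_iInf_norm_sub_sq_s9 [FiniteDimensional ℝ K]
    {ι : Type*} [Fintype ι] {v : ι → E} (hv : Orthonormal ℝ v) :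
    (Fintype.card ι : ℝ) - Module.finrank ℝ K ≤ ∑ i, ⨅ g : K, ‖(g : E) - v i‖ ^ 2 :=
  calc (Fintype.card ι : ℝ) - Module.finrank ℝ K
      ≤ ∑ i, (‖v i‖ ^ 2 - ‖K.starProjection (v i)‖ ^ 2) := by
        simp only [hv.1, one_pow, sum_sub_distrib, sum_const, card_univ,
          nsmul_eq_mul, mul_one]
        linarith [K.sum_norm_sq_starProjection_le_finrank hv]
    _ ≤ ∑ i, ⨅ g : K, ‖(g : E) - v i‖ ^ 2 :=
        sum_le_sum fun i _ => K.norm_sq_sub_norm_sq_starProjection_le_iInf (v i)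

end Submodule

theorem Orthonormal.card_sub_card_le_sum_iInf_norm_sub_sq_span {E : Type*} [NormedAddCommGroup E]
    [InnerProductSpace ℝ E] {ι κ : Type*} [Fintype ι] [Fintype κ] {v : ι → E}
    (hv : Orthonormal ℝ v) (u : κ → E) :
    (Fintype.card ι : ℝ) - Fintype.card κ ≤
      ∑ i, ⨅ g : Submodule.span ℝ (Set.range u), ‖(g : E) - v i‖ ^ 2 :=
  have := FiniteDimensional.span_of_finite ℝ (Set.finite_range u)
  (sub_le_sub_left (by exact_mod_cast finrank_range_le_card u) _).trans
    (hv.card_sub_finrank_le_sum_iInf_norm_sub_sq_s9 _)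

theorem MeasureTheory.Lp.setOf_ae_eq_eq_range_toLp {α E : Type*} [MeasurableSpace α]
    [NormedAddCommGroup E] {p : ENNReal} {μ : Measure α} {ι : Type*} {f : ι → α → E}
    (hf : ∀ j, MemLp (f j) p μ) :
    {u : Lp E p μ | ∃ j, u =ᵐ[μ] f j} = Set.range fun j => (hf j).toLp (f j) := by
  ext u
  constructor
  · rintro ⟨j, hj⟩
    exact ⟨j, Lp.ext ((hf j).coeFn_toLp.trans hj.symm)⟩
  · rintro ⟨j, rfl⟩
    exact ⟨j, (hf j).coeFn_toLp⟩

theorem MeasureTheory.le_sum_integral_of_ae_le_sum {Ω : Type*} [MeasurableSpace Ω]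
    {μ : Measure Ω} [IsProbabilityMeasure μ] {ι : Type*} {s : Finset ι} {F : ι → Ω → ℝ}
    (hF : ∀ i ∈ s, Integrable (F i) μ) {c : ℝ} (h : ∀ᵐ ω ∂μ, c ≤ ∑ i ∈ s, F i ω) :
    c ≤ ∑ i ∈ s, ∫ ω, F i ω ∂μ := by
  rw [← integral_finsetSum s hF]
  simpa using integral_mono_ae (integrable_const c) (integrable_finsetSum s hF) h

theorem kernel_method_random_sample_lower_bound_general
    {X : Type*} [MeasurableSpace X] (P : Measure X)
    {Ω : Type*} [MeasurableSpace Ω] (μ : Measure Ω) [IsProbabilityMeasure μ]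
    (n N : ℕ) (K : X → X → ℝ) (xs : Fin n → Ω → X)
    (hK : ∀ᵐ ω ∂μ, ∀ j, MemLp (fun x => K x (xs j ω)) 2 P)
    (φ : Fin N → Lp ℝ 2 P) (hφ : Orthonormal ℝ φ)
    (W : Ω → Submodule ℝ (Lp ℝ 2 P))
    (hW : ∀ ω, W ω = Submodule.span ℝ
      {f : Lp ℝ 2 P | ∃ j : Fin n, (f : X → ℝ) =ᵐ[P] fun x => K x (xs j ω)})
    (hmeas : ∀ i, Measurable fun ω => ⨅ g : W ω, ‖(g : Lp ℝ 2 P) - φ i‖ ^ 2)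
    (ε : ℝ)
    (hε : (1 / (N : ℝ)) *
        ∑ i, ∫ ω, (⨅ g : W ω, ‖(g : Lp ℝ 2 P) - φ i‖ ^ 2) ∂μ ≤ ε) :
    (n : ℝ) ≥ (1 - ε) * (N : ℝ) := by
  have hint : ∀ i, Integrable (fun ω => ⨅ g : W ω, ‖(g : Lp ℝ 2 P) - φ i‖ ^ 2) μ := fun i =>
    .of_bound (hmeas i).aestronglyMeasurable 1 <| ae_of_all _ fun ω => by
      rw [Real.norm_of_nonneg ((W ω).iInf_norm_sub_sq_nonneg _)]
      simpa [hφ.1 i] using (W ω).iInf_norm_sub_sq_le_norm_sq (φ i)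
  have hpointwise : ∀ᵐ ω ∂μ, (N : ℝ) - n ≤ ∑ i, ⨅ g : W ω, ‖(g : Lp ℝ 2 P) - φ i‖ ^ 2 := by
    filter_upwards [hK] with ω hKω
    rw [hW ω, Lp.setOf_ae_eq_eq_range_toLp hKω]
    simpa using hφ.card_sub_card_le_sum_iInf_norm_sub_sq_span fun j => (hKω j).toLp _
  have hsum := le_sum_integral_of_ae_le_sum (fun i _ => hint i) hpointwise
  rcases N.eq_zero_or_pos with rfl | hN
  · simp
  rw [one_div, inv_mul_le_iff₀ (by positivity)] at hε
  linarith

/-- **Sample size lower bound for kernel methods with random training inputs.**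
Let `P` be a probability measure on `X`, let `x 1, …, x n : Ω → X` be random
points on a probability space `(Ω, μ)` such that for `μ`-a.e. `ω` each section
`x ↦ K x (xs j ω)` lies in `L²(P)`, and let `φ 1, …, φ N` be an orthonormal
family in `L²(P)`.  Let `W ω` be the span in `L²(P)` of the `n` functions
`K (·, xs j ω)`, and assume each `ω ↦ inf_{g ∈ W ω} ‖g - φ i‖²` is measurable.
If `(1/N) ∑ i, E_ω[inf_{g ∈ W ω} ‖g - φ i‖²] ≤ ε`, then `n ≥ (1 - ε) N`. -/
theorem kernel_method_random_sample_lower_bound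
    {X : Type*} [MeasurableSpace X] (P : Measure X) [IsProbabilityMeasure P]
    {Ω : Type*} [MeasurableSpace Ω] (μ : Measure Ω) [IsProbabilityMeasure μ]
    (n N : ℕ) (K : X → X → ℝ) (xs : Fin n → Ω → X)
    (hK : ∀ᵐ ω ∂μ, ∀ j, MemLp (fun x => K x (xs j ω)) 2 P)
    (φ : Fin N → Lp ℝ 2 P) (hφ : Orthonormal ℝ φ)
    (W : Ω → Submodule ℝ (Lp ℝ 2 P))
    (hW : ∀ ω, W ω = Submodule.span ℝ
      {f : Lp ℝ 2 P | ∃ j : Fin n, (f : X → ℝ) =ᵐ[P] fun x => K x (xs j ω)})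
    (hmeas : ∀ i, Measurable fun ω => ⨅ g : W ω, ‖(g : Lp ℝ 2 P) - φ i‖ ^ 2)
    (ε : ℝ)
    (hε : (1 / (N : ℝ)) *
        ∑ i, ∫ ω, (⨅ g : W ω, ‖(g : Lp ℝ 2 P) - φ i‖ ^ 2) ∂μ ≤ ε) :
    (n : ℝ) ≥ (1 - ε) * (N : ℝ) :=
  kernel_method_random_sample_lower_bound_general P μ n N K xs hK φ hφ W hW hmeas ε hε
end
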